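/- arXiv:0911.4899 — 6 statements merged into one kernel-verified Lean document; each statement's English description precedes it below -/
import Mathlib

section
/- Let β, β̂ ∈ ℝ^p, S = spt(β), d = β̂ − β, and suppose constants c₁, c₂, n > 0 satisfy c₂ n ‖d‖₂² ≤ 2 c₁ √n (‖d‖₁ + ‖β‖₁ − ‖β̂‖₁). Then ‖d‖₂ ≤ (4c₁/c₂) √(|S|/n). -/
open Finset

theorem sum_abs_sub_add_sum_abs_sub_sum_abs_le {ι : Type*} [Fintype ι] [DecidableEq ι]
    (x y : ι → ℝ) (S : Finset ι) (hS : ∀ i ∉ S, x i = 0) :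
    ∑ i, |y i - x i| + ∑ i, |x i| - ∑ i, |y i| ≤ 2 * ∑ i ∈ S, |y i - x i| := by
  have hterm (i : ι) : |y i - x i| + |x i| - |y i| ≤ if i ∈ S then 2 * |y i - x i| else 0 := by
    split_ifs with hi
    · linarith [abs_sub_abs_le_abs_sub (x i) (y i), abs_sub_comm (x i) (y i)]
    · simp [hS i hi]
  calc ∑ i, |y i - x i| + ∑ i, |x i| - ∑ i, |y i|
      = ∑ i, (|y i - x i| + |x i| - |y i|) := by rw [sum_sub_distrib, sum_add_distrib]
    _ ≤ ∑ i, if i ∈ S then 2 * |y i - x i| else 0 := sum_le_sum fun i _ => hterm i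
    _ = 2 * ∑ i ∈ S, |y i - x i| := by rw [sum_ite_mem, univ_inter, mul_sum]

theorem sum_abs_le_sqrt_card_mul_sqrt_sum_sq {ι : Type*} [Fintype ι] (d : ι → ℝ)
    (S : Finset ι) :
    ∑ i ∈ S, |d i| ≤ √(#S : ℝ) * √(∑ i, d i ^ 2) := by
  calc ∑ i ∈ S, |d i| = ∑ i ∈ S, 1 * |d i| := by simp
    _ ≤ √(∑ i ∈ S, (1 : ℝ) ^ 2) * √(∑ i ∈ S, |d i| ^ 2) :=
      Real.sum_mul_le_sqrt_mul_sqrt S (fun _ => 1) (|d ·|)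
    _ ≤ √(#S : ℝ) * √(∑ i, d i ^ 2) := by
      simp only [one_pow, sum_const, nsmul_eq_mul, mul_one, sq_abs]
      gcongr √(#S : ℝ) * √?_
      exact sum_le_univ_sum_of_nonneg fun i => sq_nonneg (d i)

theorem le_of_sq_le_mul {a b : ℝ} (hb : 0 ≤ b) (h : a ^ 2 ≤ b * a) : a ≤ b := by
  nlinarith

/-- Deterministic core of Proposition 2.1. -/
theorem stmt2 {p : ℕ} (β βh : Fin p → ℝ) (c₁ c₂ n : ℝ)
    (hc₁ : 0 < c₁) (hc₂ : 0 < c₂) (hn : 0 < n)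
    (h : c₂ * n * (∑ i, (βh i - β i) ^ 2) ≤
        2 * c₁ * Real.sqrt n * ((∑ i, |βh i - β i|) + (∑ i, |β i|) - ∑ i, |βh i|)) :
    Real.sqrt (∑ i, (βh i - β i) ^ 2) ≤
      (4 * c₁ / c₂) * Real.sqrt (({i | β i ≠ 0} : Set (Fin p)).ncard / n) := by
  set S : Finset (Fin p) := univ.filter (β · ≠ 0)
  have hcard : ({i | β i ≠ 0} : Set (Fin p)).ncard = #S := by
    rw [← Set.ncard_coe_finset, coe_filter_univ]
  set D := √(∑ i, (βh i - β i) ^ 2)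
  have hD2 : D ^ 2 = ∑ i, (βh i - β i) ^ 2 := Real.sq_sqrt (by positivity)
  have hexcess : ∑ i, |βh i - β i| + ∑ i, |β i| - ∑ i, |βh i| ≤
      2 * (√(#S : ℝ) * D) :=
    (sum_abs_sub_add_sum_abs_sub_sum_abs_le β βh S (by simp [S])).trans
      (by gcongr; exact sum_abs_le_sqrt_card_mul_sqrt_sum_sq _ S)
  have hsn : 0 < √n := Real.sqrt_pos.2 hn
  apply le_of_sq_le_mul (by positivity)
  rw [hcard, Real.sqrt_div (Nat.cast_nonneg _), div_mul_div_comm, div_mul_eq_mul_div,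
    le_div_iff₀ (by positivity)]
  refine le_of_mul_le_mul_right ?_ hsn
  calc D ^ 2 * (c₂ * √n) * √n = c₂ * n * D ^ 2 := by
        linear_combination D ^ 2 * c₂ * Real.mul_self_sqrt hn.le
    _ ≤ 2 * c₁ * √n * (2 * (√(#S : ℝ) * D)) := by
        rw [hD2]; exact h.trans (by gcongr)
    _ = 4 * c₁ * √(#S : ℝ) * D * √n := by ring
end

section
/- Let X ∈ ℝ^{n×p} have nonzero columns V₁,…,V_p, and define μ_X = max_{i<j} |V_iᵀV_j|/(‖V_i‖₂‖V_j‖₂), a_X = min_i ‖V_i‖₂²/n, b_X = max_i ‖V_i‖₂²/n. Then for any d ∈ ℝ^p supported on a set S, ‖X d‖₂² ≥ (a_X + b_X μ_X) n ‖d_S‖₂² − b_X μ_X n ‖d_S‖₁². -/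
/-!
Write `‖X d‖₂² = dᵀ G d` with `G = XᵀX` the Gram matrix of the columns. Termwise,
`dᵢ dⱼ Gᵢⱼ ≥ -β |dᵢ| |dⱼ|` off the diagonal, where `β = b μ n` bounds `|⟨Vᵢ, Vⱼ⟩|`, and
`dᵢ² Gᵢᵢ ≥ α dᵢ² = (α + β) dᵢ² - β |dᵢ|²` on it, where `α = a n`. Summing over all pairs gives
`dᵀ G d ≥ (α + β) ‖d‖₂² - β ‖d‖₁²`.
-/

open Matrix Finset

theorem sum_sq_mulVec_eq_dotProduct_gram {m ι : Type*} [Fintype m] [Fintype ι]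
    (X : Matrix m ι ℝ) (d : ι → ℝ) :
    ∑ k, (∑ i, d i * X k i) ^ 2 = d ⬝ᵥ (Xᵀ * X) *ᵥ d := by
  rw [← mulVec_mulVec, dotProduct_mulVec, vecMul_transpose]
  simp only [dotProduct, mulVec, sq]
  simp [mul_comm]

theorem transpose_mul_self_apply {m ι : Type*} [Fintype m] (X : Matrix m ι ℝ) (i j : ι) :
    (Xᵀ * X) i j = ∑ k, X k i * X k j := by
  simp [mul_apply]

theorem le_dotProduct_mulVec_of_diag_of_offDiag {ι : Type*} [Fintype ι] [DecidableEq ι]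
    (G : Matrix ι ι ℝ) (α β : ℝ) (hdiag : ∀ i, α ≤ G i i)
    (hoff : ∀ i j, i ≠ j → |G i j| ≤ β) (d : ι → ℝ) :
    (α + β) * ∑ i, d i ^ 2 - β * (∑ i, |d i|) ^ 2 ≤ d ⬝ᵥ G *ᵥ d := by
  have hterm : ∀ i j, (if i = j then (α + β) * d i ^ 2 else 0) - β * (|d i| * |d j|)
      ≤ d i * (G i j * d j) := by
    intro i j
    rcases eq_or_ne i j with rfl | hij
    · have := mul_le_mul_of_nonneg_left (hdiag i) (sq_nonneg (d i))
      rw [if_pos rfl, abs_mul_abs_self]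
      linarith [show d i * (G i i * d i) = d i ^ 2 * G i i by ring]
    · have hG : |d i * (G i j * d j)| ≤ β * (|d i| * |d j|) :=
        calc |d i * (G i j * d j)| = |G i j| * (|d i| * |d j|) := by
              rw [abs_mul, abs_mul]; ring
          _ ≤ β * (|d i| * |d j|) := by gcongr; exact hoff i j hij
      rw [if_neg hij]
      linarith [neg_abs_le (d i * (G i j * d j))]
  calc (α + β) * ∑ i, d i ^ 2 - β * (∑ i, |d i|) ^ 2
      = ∑ i, ∑ j, ((if i = j then (α + β) * d i ^ 2 else 0) - β * (|d i| * |d j|)) := by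
        simp only [sum_sub_distrib, sum_ite_eq, mem_univ, if_true, ← mul_sum, sq,
          sum_mul_sum]
    _ ≤ ∑ i, ∑ j, d i * (G i j * d j) :=
        sum_le_sum fun i _ => sum_le_sum fun j _ => hterm i j
    _ = d ⬝ᵥ G *ᵥ d := by simp only [dotProduct, mulVec, mul_sum]

theorem abs_inner_le_of_coherence_of_norm_sq_le {m ι : Type*} [Fintype m]
    (X : Matrix m ι ℝ) (c μ : ℝ) (hμ0 : 0 ≤ μ) (hc : ∀ j, ∑ k, X k j ^ 2 ≤ c)
    {i j : ι} (hμ : |∑ k, X k i * X k j| ≤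
        μ * (Real.sqrt (∑ k, X k i ^ 2) * Real.sqrt (∑ k, X k j ^ 2))) :
    |∑ k, X k i * X k j| ≤ μ * c := by
  have hc0 : 0 ≤ c := (sum_nonneg fun k _ => sq_nonneg (X k i)).trans (hc i)
  have hnorms : Real.sqrt (∑ k, X k i ^ 2) * Real.sqrt (∑ k, X k j ^ 2) ≤ c :=
    calc Real.sqrt (∑ k, X k i ^ 2) * Real.sqrt (∑ k, X k j ^ 2)
        ≤ Real.sqrt c * Real.sqrt c :=
          mul_le_mul (Real.sqrt_le_sqrt (hc i)) (Real.sqrt_le_sqrt (hc j))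
            (Real.sqrt_nonneg _) (Real.sqrt_nonneg _)
      _ = c := Real.mul_self_sqrt hc0
  exact hμ.trans (mul_le_mul_of_nonneg_left hnorms hμ0)

theorem stmt4_general {n p : ℕ} (X : Matrix (Fin n) (Fin p) ℝ)
    (a b μ : ℝ) (hμ0 : 0 ≤ μ)
    (haX : ∀ j, a * n ≤ ∑ k, X k j ^ 2)
    (hbX : ∀ j, (∑ k, X k j ^ 2) ≤ b * n)
    (hμ : ∀ i j : Fin p, i ≠ j →
      |∑ k, X k i * X k j| ≤
        μ * (Real.sqrt (∑ k, X k i ^ 2) * Real.sqrt (∑ k, X k j ^ 2)))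
    (d : Fin p → ℝ) :
    (a + b * μ) * n * (∑ i, d i ^ 2) - b * μ * n * (∑ i, |d i|) ^ 2 ≤
      ∑ k, (∑ i, d i * X k i) ^ 2 := by
  have hdiag : ∀ i, a * n ≤ (Xᵀ * X) i i := fun i => by
    simpa only [transpose_mul_self_apply, ← sq] using haX i
  have hoff : ∀ i j, i ≠ j → |(Xᵀ * X) i j| ≤ μ * (b * n) := fun i j hij => by
    rw [transpose_mul_self_apply]
    exact abs_inner_le_of_coherence_of_norm_sq_le X _ μ hμ0 hbX (hμ i j hij)
  have hquad := le_dotProduct_mulVec_of_diag_of_offDiag _ _ _ hdiag hoff d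
  rw [sum_sq_mulVec_eq_dotProduct_gram]
  linarith

/-- Quadratic lower bound: `‖Xd‖₂² ≥ (a_X + b_X μ_X) n ‖d_S‖₂² − b_X μ_X n ‖d_S‖₁²`. -/
theorem stmt4 {n p : ℕ} (X : Matrix (Fin n) (Fin p) ℝ)
    (hV : ∀ j, (fun k => X k j) ≠ 0)
    (a b μ : ℝ) (ha : 0 < a) (hb : 0 < b) (hμ0 : 0 ≤ μ)
    (haX : ∀ j, a * n ≤ ∑ k, X k j ^ 2)
    (hbX : ∀ j, (∑ k, X k j ^ 2) ≤ b * n)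
    (hμ : ∀ i j : Fin p, i ≠ j →
      |∑ k, X k i * X k j| ≤
        μ * (Real.sqrt (∑ k, X k i ^ 2) * Real.sqrt (∑ k, X k j ^ 2)))
    (S : Finset (Fin p)) (d : Fin p → ℝ) (hd : ∀ i ∉ S, d i = 0) :
    (a + b * μ) * n * (∑ i, d i ^ 2) - b * μ * n * (∑ i, |d i|) ^ 2 ≤
      ∑ k, (∑ i, d i * X k i) ^ 2 :=
  stmt4_general X a b μ hμ0 haX hbX hμ d
end

section
/- (Lemma on the ℓ₁-norm bound.) Let a, b, μ, τ, c̃, n > 0 and let S be a finite index set with a + bμ > bμ(3 + 4τ)|S|. Suppose vectors d_S (supported on S) and v_{Sᶜ} (supported on Sᶜ) satisfy: (i) ‖v_{Sᶜ}‖₁ ≤ (1+2τ)‖d_S‖₁, and (ii) (a + bμ) n ‖d_S‖₂² ≤ bμ n ‖d_S‖₁² + 2 c̃ (2+1/τ) √n ‖d_S‖₁ + 2(bμ √n ‖d_S‖₁ − c̃/τ) √n ‖v_{Sᶜ}‖₁. Then bμ √n ‖d_S‖₁ < c̃/τ. -/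
open Finset

theorem sq_sum_abs_le_card_mul_sum_sq {ι : Type*} [Fintype ι] (S : Finset ι) (d : ι → ℝ)
    (hd : ∀ i ∉ S, d i = 0) :
    (∑ i, |d i|) ^ 2 ≤ #S * ∑ i, d i ^ 2 := by
  have hsupp {f : ℝ → ℝ} (hf : f 0 = 0) : ∑ i ∈ S, f (d i) = ∑ i, f (d i) :=
    sum_subset S.subset_univ fun i _ hi => by rw [hd i hi, hf]
  rw [← hsupp abs_zero, ← hsupp (f := (· ^ 2)) (zero_pow two_ne_zero)]
  simpa only [sq_abs] using sq_sum_le_card_mul_sum_sq (s := S) (f := fun i => |d i|)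

/-- Once `c̃/τ ≤ B √n ‖d‖₁`, the cone condition `‖v‖₁ ≤ (1 + 2τ)‖d‖₁` makes the two linear terms
cancel: `2 (B √n ‖d‖₁ - c̃/τ) √n (1 + 2τ) ‖d‖₁ = 2 (1 + 2τ) B n ‖d‖₁² - 2 c̃ (2 + 1/τ) √n ‖d‖₁`. -/
theorem rhs_le_of_cone_condition {B τ ct n L V : ℝ} (hτ : 0 < τ) (hn : 0 ≤ n)
    (hV : V ≤ (1 + 2 * τ) * L) (hL : ct / τ ≤ B * √n * L) :
    B * n * L ^ 2 + 2 * ct * (2 + 1 / τ) * √n * L + 2 * (B * √n * L - ct / τ) * √n * V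
      ≤ B * (3 + 4 * τ) * n * L ^ 2 := by
  have hmul : 2 * (B * √n * L - ct / τ) * √n * V
      ≤ 2 * (B * √n * L - ct / τ) * √n * ((1 + 2 * τ) * L) := by
    gcongr
  have hsq : √n * √n = n := Real.mul_self_sqrt hn
  have hinv : τ * τ⁻¹ = 1 := mul_inv_cancel₀ hτ.ne'
  linear_combination hmul + (2 * (1 + 2 * τ) * B * L ^ 2) * hsq - (4 * √n * L * ct) * hinv

theorem stmt6_general {p : ℕ} (a b μ τ ct n : ℝ)
    (hb : 0 < b) (hμ : 0 < μ) (hτ : 0 < τ) (hct : 0 < ct) (hn : 0 < n)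
    (S : Finset (Fin p)) (dS vSc : Fin p → ℝ)
    (hdS : ∀ i ∉ S, dS i = 0)
    (hgap : b * μ * (3 + 4 * τ) * S.card < a + b * μ)
    (h1 : (∑ i, |vSc i|) ≤ (1 + 2 * τ) * ∑ i, |dS i|)
    (h2 : (a + b * μ) * n * (∑ i, dS i ^ 2) ≤
        b * μ * n * (∑ i, |dS i|) ^ 2
          + 2 * ct * (2 + 1 / τ) * Real.sqrt n * (∑ i, |dS i|)
          + 2 * (b * μ * Real.sqrt n * (∑ i, |dS i|) - ct / τ)
              * Real.sqrt n * (∑ i, |vSc i|)) :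
    b * μ * Real.sqrt n * (∑ i, |dS i|) < ct / τ := by
  by_contra! hL
  set L := ∑ i, |dS i|
  set Q := ∑ i, dS i ^ 2
  have hcs : L ^ 2 ≤ S.card * Q := sq_sum_abs_le_card_mul_sum_sq S dS hdS
  have hLpos : 0 < L := by
    refine lt_of_le_of_ne (sum_nonneg fun i _ => abs_nonneg _) fun hL0 => ?_
    rw [← hL0, mul_zero] at hL
    exact (div_pos hct hτ).not_ge hL
  have hQpos : 0 < Q := pos_of_mul_pos_right ((pow_pos hLpos 2).trans_le hcs) (Nat.cast_nonneg _)
  have hkey : (a + b * μ) * (n * Q) ≤ b * μ * (3 + 4 * τ) * S.card * (n * Q) :=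
    calc (a + b * μ) * (n * Q) ≤ b * μ * (3 + 4 * τ) * n * L ^ 2 := by
          linarith [h2.trans (rhs_le_of_cone_condition hτ hn.le h1 hL)]
      _ ≤ b * μ * (3 + 4 * τ) * n * (S.card * Q) := by gcongr
      _ = b * μ * (3 + 4 * τ) * S.card * (n * Q) := by ring
  exact (le_of_mul_le_mul_right hkey (mul_pos hn hQpos)).not_gt hgap

/-- Lemma 2.1 (ℓ₁-norm bound): under the gap condition and the cone condition,
`b μ √n ‖d_S‖₁ < c̃/τ`. -/
theorem stmt6 {p : ℕ} (a b μ τ ct n : ℝ)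
    (ha : 0 < a) (hb : 0 < b) (hμ : 0 < μ) (hτ : 0 < τ) (hct : 0 < ct) (hn : 0 < n)
    (S : Finset (Fin p)) (dS vSc : Fin p → ℝ)
    (hdS : ∀ i ∉ S, dS i = 0) (hvSc : ∀ i ∈ S, vSc i = 0)
    (hgap : b * μ * (3 + 4 * τ) * S.card < a + b * μ)
    (h1 : (∑ i, |vSc i|) ≤ (1 + 2 * τ) * ∑ i, |dS i|)
    (h2 : (a + b * μ) * n * (∑ i, dS i ^ 2) ≤
        b * μ * n * (∑ i, |dS i|) ^ 2
          + 2 * ct * (2 + 1 / τ) * Real.sqrt n * (∑ i, |dS i|)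
          + 2 * (b * μ * Real.sqrt n * (∑ i, |dS i|) - ct / τ)
              * Real.sqrt n * (∑ i, |vSc i|)) :
    b * μ * Real.sqrt n * (∑ i, |dS i|) < ct / τ :=
  stmt6_general a b μ τ ct n hb hμ hτ hct hn S dS vSc hdS hgap h1 h2
end

section
/- Let d ∈ ℝ^p, let T ⊆ {1,…,p} with |T| = s ≥ 1, and let S₁ be the union of T with the set of the s indices i ∉ T having the largest values of |d_i|. Then ‖d‖₂² ≤ ‖d_{S₁}‖₂² + ‖d_{Tᶜ}‖₁²/s. -/
/-!
Every coordinate outside `S₁` is dominated by each of the `s` coordinates of `S₁ \ T`, so it is at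
most their average, hence at most `‖d_{Tᶜ}‖₁ / s`. Bounding `d_j² ≤ (‖d_{Tᶜ}‖₁ / s) |d_j|` off `S₁`
and summing over `S₁ᶜ ⊆ Tᶜ` gives `‖d_{S₁ᶜ}‖₂² ≤ ‖d_{Tᶜ}‖₁² / s`.
-/

open Finset

variable {ι : Type*}

theorem Finset.card_mul_abs_le_sum_abs_compl [Fintype ι] [DecidableEq ι] (f : ι → ℝ)
    {T U : Finset ι} (hUT : Disjoint U T) {j : ι} (hj : ∀ i ∈ U, |f j| ≤ |f i|) :
    #U * |f j| ≤ ∑ i ∈ Tᶜ, |f i| :=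
  calc #U * |f j| = #U • |f j| := (nsmul_eq_mul _ _).symm
    _ ≤ ∑ i ∈ U, |f i| := card_nsmul_le_sum U _ _ hj
    _ ≤ ∑ i ∈ Tᶜ, |f i| := sum_le_sum_of_subset_of_nonneg
        (subset_compl_iff_disjoint_right.2 hUT) fun i _ _ => abs_nonneg (f i)

theorem Finset.sum_sq_le_mul_sum_abs (f : ι → ℝ) (B : Finset ι) {M : ℝ}
    (hM : ∀ i ∈ B, |f i| ≤ M) : ∑ i ∈ B, f i ^ 2 ≤ M * ∑ i ∈ B, |f i| := by
  rw [mul_sum]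
  refine sum_le_sum fun i hi => ?_
  rw [← sq_abs, sq]
  exact mul_le_mul_of_nonneg_right (hM i hi) (abs_nonneg _)

theorem stmt7_general {p : ℕ} (d : Fin p → ℝ) (T S₁ : Finset (Fin p)) (s : ℕ) (hs : 1 ≤ s)
    (hTS : T ⊆ S₁) (hcard : (S₁ \ T).card = s)
    (hmax : ∀ i ∈ S₁ \ T, ∀ j ∉ S₁, |d j| ≤ |d i|) :
    (∑ i, d i ^ 2) ≤ (∑ i ∈ S₁, d i ^ 2) + (∑ i ∈ Tᶜ, |d i|) ^ 2 / s := by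
  set A := ∑ i ∈ Tᶜ, |d i|
  have hs_pos : (0 : ℝ) < s := by exact_mod_cast hs
  have h_tail : ∀ j ∈ S₁ᶜ, |d j| ≤ A / s := fun j hj => by
    rw [le_div_iff₀ hs_pos, mul_comm, ← hcard]
    exact card_mul_abs_le_sum_abs_compl d sdiff_disjoint fun i hi => hmax i hi j (mem_compl.1 hj)
  calc ∑ i, d i ^ 2 = ∑ i ∈ S₁, d i ^ 2 + ∑ i ∈ S₁ᶜ, d i ^ 2 := (sum_add_sum_compl S₁ _).symm
    _ ≤ ∑ i ∈ S₁, d i ^ 2 + A / s * ∑ i ∈ S₁ᶜ, |d i| := by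
        gcongr
        exact sum_sq_le_mul_sum_abs d _ h_tail
    _ ≤ ∑ i ∈ S₁, d i ^ 2 + A / s * A := by
        gcongr
        exact sum_le_sum_of_subset_of_nonneg (compl_subset_compl.2 hTS)
          fun i _ _ => abs_nonneg (d i)
    _ = ∑ i ∈ S₁, d i ^ 2 + A ^ 2 / s := by ring

/-- Candès–Tao Lemma 3.1: with `S₁` the union of `T` and the `s` largest-magnitude
coordinates of `d` outside `T`, `‖d‖₂² ≤ ‖d_{S₁}‖₂² + ‖d_{Tᶜ}‖₁²/s`. -/
theorem stmt7 {p : ℕ} (d : Fin p → ℝ) (T S₁ : Finset (Fin p)) (s : ℕ) (hs : 1 ≤ s)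
    (hT : T.card = s) (hTS : T ⊆ S₁) (hcard : (S₁ \ T).card = s)
    (hmax : ∀ i ∈ S₁ \ T, ∀ j ∉ S₁, |d j| ≤ |d i|) :
    (∑ i, d i ^ 2) ≤ (∑ i ∈ S₁, d i ^ 2) + (∑ i ∈ Tᶜ, |d i|) ^ 2 / s :=
  stmt7_general d T S₁ s hs hTS hcard hmax
end

section
/- Proposition 2.2 (deterministic part): Let X ∈ ℝ^{n×p} with nonzero columns, with coherence μ_X and column norm parameters a_X = min_i ‖V_i‖₂²/n, b_X = max_i ‖V_i‖₂²/n. Let β ∈ ℝ^p with s = |spt(β)|, τ > 0 with a_X + b_X μ_X > 2 b_X (3 + 4τ) s μ_X, and c₁, c₃ > 0. Suppose v ∈ ℝ^p satisfies c₃ ‖X(v − β)‖₂² ≤ 2c₁√n ‖v − β‖₁ − 2c₁(1 + 1/τ)√n (‖v‖₁ − ‖β‖₁). Then ‖v − β‖₂ ≤ κ_r √(s/n), where κ_r = 3(2 + 1/τ)√(2 + (1+2τ)²) c₁ / ((a_X + b_X μ_X) c₃). -/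
/-!
Write `h = v - β`, `S = spt β`, `x = 1 + 2τ`. Since `‖v‖₁ - ‖β‖₁ ≥ ‖h_{Sᶜ}‖₁ - ‖h_S‖₁`, the basic
inequality gives `τ c₃ ‖Xh‖₂² ≤ 2 c₁ √n (x ‖h_S‖₁ - ‖h_{Sᶜ}‖₁)`, hence the cone condition
`‖h_{Sᶜ}‖₁ ≤ x ‖h_S‖₁`. Let `T` collect the `s` largest entries of `|h|` off `S` and `P = S ∪ T`,
so `|P| ≤ 2s`. Coherence bounds the off-diagonal Gram entries by `bμn`, which yields
`‖Xh‖₂² ≥ n ((a + bμ) ‖h_P‖₂² - bμ ‖h_P‖₁² - 2bμ ‖h_P‖₁ ‖h_{Pᶜ}‖₁)`; with Cauchy–Schwarz on `P`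
and the gap condition this bounds `‖h_P‖₂` by `(1 + 2x) c₁ √s / (τ c₃ (a + bμ) √n)`. Finally the
Candès–Tao shelling inequality `4s ‖h_{Pᶜ}‖₂² ≤ ‖h_{Sᶜ}‖₁²` and the cone condition give
`‖h_{Pᶜ}‖₂ ≤ (x/2) ‖h_P‖₂`.
-/

open Finset

theorem Finset.exists_subset_card_eq_forall_sdiff_le {ι α : Type*} [DecidableEq ι]
    [AddCommGroup α] [LinearOrder α] [IsOrderedAddMonoid α] (w : ι → α) {F : Finset ι} {k : ℕ}
    (hk : k ≤ #F) : ∃ T ⊆ F, #T = k ∧ ∀ j ∈ F \ T, ∀ i ∈ T, w j ≤ w i := by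
  obtain ⟨T, hT, hmax⟩ := (powersetCard k F).exists_max_image (fun T => ∑ i ∈ T, w i)
    (powersetCard_nonempty.mpr hk)
  obtain ⟨hTF, hTk⟩ := mem_powersetCard.mp hT
  refine ⟨T, hTF, hTk, fun j hj i hi => ?_⟩
  obtain ⟨hjF, hjT⟩ := mem_sdiff.mp hj
  have hj' : j ∉ T.erase i := fun h => hjT (mem_of_mem_erase h)
  have hswap : insert j (T.erase i) ∈ powersetCard k F := by
    refine mem_powersetCard.mpr ⟨insert_subset hjF ((erase_subset i T).trans hTF), ?_⟩
    have := card_pos.mpr ⟨i, hi⟩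
    rw [card_insert_of_notMem hj', card_erase_of_mem hi]
    omega
  have hle := hmax _ hswap
  rwa [sum_insert hj', sum_erase_eq_sub hi, add_sub_left_comm, add_le_iff_nonpos_right,
    sub_nonpos] at hle

theorem exists_subset_card_le_four_mul_sum_sq_le {ι : Type*} [DecidableEq ι] (w : ι → ℝ)
    (F : Finset ι) (k : ℕ) :
    ∃ T ⊆ F, #T ≤ k ∧ 4 * k * ∑ i ∈ F \ T, w i ^ 2 ≤ (∑ i ∈ F, |w i|) ^ 2 := by
  rcases le_or_gt k #F with hk | hk
  · obtain ⟨T, hTF, hTk, htop⟩ := F.exists_subset_card_eq_forall_sdiff_le (fun i => |w i|) hk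
    refine ⟨T, hTF, hTk.le, ?_⟩
    have hshell : ∀ j ∈ F \ T, k * |w j| ≤ ∑ i ∈ T, |w i| := fun j hj => by
      simpa [hTk] using card_nsmul_le_sum T _ _ (htop j hj)
    calc 4 * k * ∑ i ∈ F \ T, w i ^ 2 = 4 * ∑ j ∈ F \ T, k * |w j| * |w j| := by
          simp_rw [mul_assoc, mul_sum, ← sq, sq_abs]
      _ ≤ 4 * ∑ j ∈ F \ T, (∑ i ∈ T, |w i|) * |w j| := by
          gcongr with j hj
          exact hshell j hj
      _ ≤ (∑ i ∈ T, |w i| + ∑ j ∈ F \ T, |w j|) ^ 2 := by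
          rw [← mul_sum, ← mul_assoc]; exact four_mul_le_sq_add _ _
      _ = (∑ i ∈ F, |w i|) ^ 2 := by rw [add_comm, sum_sdiff hTF]
  · exact ⟨F, subset_refl F, hk.le, by simpa using sq_nonneg _⟩

theorem sum_abs_sub_compl_sub_sum_abs_sub_le {ι : Type*} [Fintype ι] [DecidableEq ι]
    {β : ι → ℝ} (v : ι → ℝ) {S : Finset ι} (hS : ∀ i ∉ S, β i = 0) :
    ∑ i ∈ Sᶜ, |v i - β i| - ∑ i ∈ S, |v i - β i| ≤ ∑ i, |v i| - ∑ i, |β i| := by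
  rw [← sum_sub_distrib, ← sum_add_sum_compl S, sub_eq_neg_add, ← sum_neg_distrib]
  gcongr with i hi i hi
  · linarith [abs_sub_abs_le_abs_sub (β i) (v i), abs_sub_comm (v i) (β i)]
  · simp [hS i (mem_compl.mp hi)]

theorem sq_sum_abs_le_card_mul_sum_sq_of_subset {ι : Type*} {A B : Finset ι} (hAB : A ⊆ B)
    (h : ι → ℝ) : (∑ i ∈ A, |h i|) ^ 2 ≤ #A * ∑ i ∈ B, h i ^ 2 := by
  calc _ ≤ #A * ∑ i ∈ A, |h i| ^ 2 := sq_sum_le_card_mul_sum_sq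
    _ ≤ #A * ∑ i ∈ B, h i ^ 2 := by simp only [sq_abs]; gcongr

theorem sum_sq_le_sq_sum_abs_of_subset {ι : Type*} {A B : Finset ι} (hAB : A ⊆ B)
    (h : ι → ℝ) : ∑ i ∈ A, h i ^ 2 ≤ (∑ i ∈ B, |h i|) ^ 2 := by
  calc _ ≤ ∑ i ∈ B, |h i| ^ 2 := by simp only [sq_abs]; gcongr
    _ ≤ _ := sum_sq_le_sq_sum_of_nonneg fun _ _ => abs_nonneg _

theorem mul_le_of_basic_inequality {ι : Type*} [Fintype ι] [DecidableEq ι] {β v : ι → ℝ}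
    {S : Finset ι} (hS : ∀ i ∉ S, β i = 0) {Q m τ c₁ c₃ : ℝ} (hτ : 0 < τ) (hc₁ : 0 ≤ c₁)
    (hm : 0 ≤ m)
    (hineq : c₃ * Q ≤ 2 * c₁ * m * ∑ i, |v i - β i|
      - 2 * c₁ * (1 + 1 / τ) * m * (∑ i, |v i| - ∑ i, |β i|)) :
    τ * c₃ * Q ≤ 2 * c₁ * m * ((1 + 2 * τ) * ∑ i ∈ S, |v i - β i| - ∑ i ∈ Sᶜ, |v i - β i|) := by
  rw [← sum_add_sum_compl S] at hineq
  calc _ = τ * (c₃ * Q) := by ring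
    _ ≤ τ * (2 * c₁ * m * (∑ i ∈ S, |v i - β i| + ∑ i ∈ Sᶜ, |v i - β i|)
          - 2 * c₁ * (1 + 1 / τ) * m * (∑ i, |v i| - ∑ i, |β i|)) := by gcongr
    _ = 2 * c₁ * m * (τ * (∑ i ∈ S, |v i - β i| + ∑ i ∈ Sᶜ, |v i - β i|)
          - (τ + 1) * (∑ i, |v i| - ∑ i, |β i|)) := by field_simp
    _ ≤ 2 * c₁ * m * (τ * (∑ i ∈ S, |v i - β i| + ∑ i ∈ Sᶜ, |v i - β i|)
          - (τ + 1) * (∑ i ∈ Sᶜ, |v i - β i| - ∑ i ∈ S, |v i - β i|)) := by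
        gcongr 2 * c₁ * m * (_ - (τ + 1) * ?_)
        exact sum_abs_sub_compl_sub_sum_abs_sub_le v hS
    _ = _ := by ring

section Gram

variable {κ ι : Type*} [Fintype κ] (X : Matrix κ ι ℝ) (h : ι → ℝ) {d c : ℝ}

theorem sum_mul_sum_col_eq_sum_sum_gram (A B : Finset ι) :
    ∑ k, (∑ i ∈ A, h i * X k i) * (∑ j ∈ B, h j * X k j)
      = ∑ i ∈ A, ∑ j ∈ B, h i * h j * ∑ k, X k i * X k j := by
  simp_rw [sum_mul_sum, mul_sum]
  rw [sum_comm]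
  refine sum_congr rfl fun i _ => ?_
  rw [sum_comm]
  exact sum_congr rfl fun j _ => sum_congr rfl fun k _ => by ring

variable [DecidableEq ι]

theorem ite_sub_mul_abs_le_mul_gram (hd : ∀ i, d ≤ ∑ k, X k i ^ 2)
    (hc : ∀ i j, i ≠ j → |∑ k, X k i * X k j| ≤ c) (i j : ι) :
    (if i = j then (d + c) * h i ^ 2 else 0) - c * (|h i| * |h j|)
      ≤ h i * h j * ∑ k, X k i * X k j := by
  split_ifs with hij
  · subst hij
    simp only [← sq, sq_abs]
    nlinarith [mul_le_mul_of_nonneg_left (hd i) (sq_nonneg (h i))]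
  · have := mul_le_mul_of_nonneg_left (hc i j hij) (abs_nonneg (h i * h j))
    rw [← abs_mul, abs_mul (h i)] at this
    linarith [neg_abs_le (h i * h j * ∑ k, X k i * X k j)]

variable [Fintype ι]

theorem le_sum_sq_sum_mul_col (hd : ∀ i, d ≤ ∑ k, X k i ^ 2)
    (hc : ∀ i j, i ≠ j → |∑ k, X k i * X k j| ≤ c) (P : Finset ι) :
    (d + c) * ∑ i ∈ P, h i ^ 2 - c * (∑ i ∈ P, |h i|) ^ 2
        - 2 * c * ((∑ i ∈ P, |h i|) * ∑ i ∈ Pᶜ, |h i|)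
      ≤ ∑ k, (∑ i, h i * X k i) ^ 2 := by
  have hblock (A B : Finset ι) :
      ∑ i ∈ A, ∑ j ∈ B, ((if i = j then (d + c) * h i ^ 2 else 0) - c * (|h i| * |h j|))
        ≤ ∑ k, (∑ i ∈ A, h i * X k i) * (∑ j ∈ B, h j * X k j) := by
    rw [sum_mul_sum_col_eq_sum_sum_gram]
    gcongr with i _ j _
    exact ite_sub_mul_abs_le_mul_gram X h hd hc i j
  have hPP := hblock P P
  have hPPc := hblock P Pᶜ
  simp only [sum_sub_distrib, sum_ite_eq, sum_ite_mem, inter_self, inter_compl, sum_empty,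
    ← mul_sum, ← sum_mul] at hPP hPPc
  calc _ ≤ ∑ k, ((∑ i ∈ P, h i * X k i) * (∑ i ∈ P, h i * X k i)
          + 2 * ((∑ i ∈ P, h i * X k i) * ∑ i ∈ Pᶜ, h i * X k i)) := by
        rw [sum_add_distrib, ← mul_sum]; linear_combination hPP + 2 * hPPc
    _ ≤ ∑ k, (∑ i, h i * X k i) ^ 2 := by
        gcongr with k
        rw [← sum_add_sum_compl P]
        nlinarith [sq_nonneg (∑ i ∈ Pᶜ, h i * X k i)]

end Gram

theorem mul_le_of_quadratic_le {k g B c x e u r : ℝ} (hk : 0 < k) (hg : 0 < g)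
    (hc : 0 ≤ c) (hx : 0 < x) (he : 0 ≤ e) (hu : 0 ≤ u) (hr : 0 ≤ r) (hrx : r ≤ x * (e * u))
    (hgap : 2 * B * e ^ 2 * (1 + 2 * x) ≤ g)
    (h : k * u * (g * u - 2 * B * e ^ 2 * u - 3 * B * e * r) ≤ 2 * c * (x * (e * u) - r)) :
    k * g * u ≤ (1 + 2 * x) * c * e := by
  rcases he.eq_or_lt with rfl | he
  · have h0 : k * g * u ^ 2 ≤ 0 := by nlinarith [mul_nonneg hc hr]
    have : u ^ 2 ≤ 0 := le_of_mul_le_mul_left (h0.trans_eq (mul_zero _).symm) (mul_pos hk hg)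
    obtain rfl : u = 0 := pow_eq_zero_iff two_ne_zero |>.mp (this.antisymm (sq_nonneg u))
    simp
  rcases hu.eq_or_lt with rfl | hu
  · simp only [mul_zero]; positivity
  -- after multiplying `h` by `(1 + 2x) e`, the gap leaves `k g u D ≤ (1 + 2x) c e D`
  obtain ⟨D, hD_def⟩ : ∃ D, D = 2 * x * (e * u) - 3 / 2 * r := ⟨_, rfl⟩
  have hD : 0 < D := by nlinarith [mul_pos hx (mul_pos he hu)]
  have hgapD : g * D ≤ (1 + 2 * x) * e * (g * u - 2 * B * e ^ 2 * u - 3 * B * e * r) := by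
    have hdiff : (1 + 2 * x) * e * (g * u - 2 * B * e ^ 2 * u - 3 * B * e * r) - g * D
        = (g - 2 * B * e ^ 2 * (1 + 2 * x)) * (e * u + 3 / 2 * r) := by rw [hD_def]; ring
    nlinarith [mul_nonneg (sub_nonneg.mpr hgap) (by positivity : 0 ≤ e * u + 3 / 2 * r)]
  have hlin : 2 * c * (x * (e * u) - r) ≤ c * D := by rw [hD_def]; nlinarith
  have : k * g * u * D ≤ (1 + 2 * x) * c * e * D := calc
    k * g * u * D = k * u * (g * D) := by ring
    _ ≤ k * u * ((1 + 2 * x) * e * (g * u - 2 * B * e ^ 2 * u - 3 * B * e * r)) := by gcongr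
    _ = (1 + 2 * x) * e * (k * u * (g * u - 2 * B * e ^ 2 * u - 3 * B * e * r)) := by ring
    _ ≤ (1 + 2 * x) * e * (c * D) := mul_le_mul_of_nonneg_left (h.trans hlin) (by positivity)
    _ = (1 + 2 * x) * c * e * D := by ring
  exact le_of_mul_le_mul_right this hD

theorem sq_mul_le_of_quadratic_le {g B W c x n s U Q q t L r : ℝ} (hg : 0 < g) (hB : 0 ≤ B)
    (hW : 0 < W) (hc : 0 ≤ c) (hx : 0 < x) (hn : 0 < n) (hs : 0 ≤ s) (hU : 0 ≤ U) (hL : 0 ≤ L)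
    (hr : 0 ≤ r) (hgap : 2 * B * s * (1 + 2 * x) ≤ g)
    (hlow : g * n * U - B * n * L ^ 2 - 2 * B * n * (L * r) ≤ Q)
    (hup : W * Q ≤ 2 * c * √n * (x * q - t)) (hcone : t ≤ x * q)
    (hq : q ^ 2 ≤ s * U) (hL2 : L ^ 2 ≤ 2 * s * U) (hrt : r ≤ t) :
    W ^ 2 * n * g ^ 2 * U ≤ (1 + 2 * x) ^ 2 * c ^ 2 * s := by
  obtain ⟨m, hm, rfl⟩ : ∃ m, 0 < m ∧ m ^ 2 = n := ⟨√n, Real.sqrt_pos.mpr hn, Real.sq_sqrt hn.le⟩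
  obtain ⟨e, he, rfl⟩ : ∃ e, 0 ≤ e ∧ e ^ 2 = s := ⟨√s, Real.sqrt_nonneg s, Real.sq_sqrt hs⟩
  obtain ⟨u, hu, rfl⟩ : ∃ u, 0 ≤ u ∧ u ^ 2 = U := ⟨√U, Real.sqrt_nonneg U, Real.sq_sqrt hU⟩
  rw [Real.sqrt_sq hm.le] at hup
  have hqe : q ≤ e * u := (abs_le_of_sq_le_sq' (by rwa [mul_pow]) (by positivity)).2
  -- `3/2` instead of `√2`: the cruder constant still suffices
  have hLe : L ≤ 3 / 2 * (e * u) := by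
    refine (pow_le_pow_iff_left₀ hL (by positivity) two_ne_zero).mp ?_
    nlinarith
  have hlow' : m ^ 2 * (u * (g * u - 2 * B * e ^ 2 * u - 3 * B * e * r)) ≤ Q := by
    have hL2' : B * L ^ 2 ≤ B * (2 * e ^ 2 * u ^ 2) := by gcongr
    have hLr : B * (L * r) ≤ B * (3 / 2 * (e * u) * r) := by gcongr
    nlinarith [mul_le_mul_of_nonneg_left hL2' (sq_nonneg m),
      mul_le_mul_of_nonneg_left hLr (sq_nonneg m)]
  have hquad : W * m * u * (g * u - 2 * B * e ^ 2 * u - 3 * B * e * r)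
      ≤ 2 * c * (x * (e * u) - r) := by
    refine le_of_mul_le_mul_left ?_ hm
    calc m * (W * m * u * (g * u - 2 * B * e ^ 2 * u - 3 * B * e * r))
        = W * (m ^ 2 * (u * (g * u - 2 * B * e ^ 2 * u - 3 * B * e * r))) := by ring
      _ ≤ W * Q := by gcongr
      _ ≤ 2 * c * m * (x * q - t) := hup
      _ = m * (2 * c * (x * q - t)) := by ring
      _ ≤ m * (2 * c * (x * (e * u) - r)) := by gcongr
  have := mul_le_of_quadratic_le (mul_pos hW hm) hg hc hx he hu hr
    (hrt.trans (hcone.trans (by gcongr))) hgap hquad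
  calc W ^ 2 * m ^ 2 * g ^ 2 * u ^ 2 = (W * m * g * u) ^ 2 := by ring
    _ ≤ ((1 + 2 * x) * c * e) ^ 2 := by gcongr
    _ = (1 + 2 * x) ^ 2 * c ^ 2 * e ^ 2 := by ring

theorem four_mul_le_sq_mul_of_shell {s R t q U x : ℝ} (hs : 0 ≤ s) (hU : 0 ≤ U) (ht : 0 ≤ t)
    (hcone : t ≤ x * q) (hq : q ^ 2 ≤ s * U) (hRt : R ≤ t ^ 2) (hsR : 4 * s * R ≤ t ^ 2) :
    4 * R ≤ x ^ 2 * U := by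
  have ht2 : t ^ 2 ≤ x ^ 2 * (s * U) := by
    calc t ^ 2 ≤ (x * q) ^ 2 := by gcongr
      _ ≤ x ^ 2 * (s * U) := by rw [mul_pow]; gcongr
  rcases hs.eq_or_lt with rfl | hs
  · nlinarith [sq_nonneg x]
  · exact le_of_mul_le_mul_left (by nlinarith) hs

theorem sqrt_add_le_of_sq_mul_le {τ c₁ c₃ g n s U R : ℝ} (hτ : 0 < τ) (hc₁ : 0 ≤ c₁)
    (hc₃ : 0 < c₃) (hg : 0 < g) (hn : 0 < n) (hs : 0 ≤ s) (hU : 0 ≤ U)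
    (hR : 4 * R ≤ (1 + 2 * τ) ^ 2 * U)
    (hUs : (τ * c₃) ^ 2 * n * g ^ 2 * U ≤ (1 + 2 * (1 + 2 * τ)) ^ 2 * c₁ ^ 2 * s) :
    √(U + R) ≤ 3 * (2 + 1 / τ) * √(2 + (1 + 2 * τ) ^ 2) * c₁ / (g * c₃) * √(s / n) := by
  rw [Real.sqrt_le_iff]
  refine ⟨by positivity, ?_⟩
  have hsq : (3 * (2 + 1 / τ) * √(2 + (1 + 2 * τ) ^ 2) * c₁ / (g * c₃) * √(s / n)) ^ 2
      = 9 * (1 + 2 * τ) ^ 2 * (2 + (1 + 2 * τ) ^ 2) * c₁ ^ 2 * s / ((τ * c₃) ^ 2 * n * g ^ 2) := by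
    rw [mul_pow, div_pow, mul_pow, mul_pow, Real.sq_sqrt (by positivity),
      Real.sq_sqrt (by positivity)]
    field_simp
    ring
  rw [hsq, le_div_iff₀ (by positivity)]
  calc (U + R) * ((τ * c₃) ^ 2 * n * g ^ 2)
      ≤ (2 + (1 + 2 * τ) ^ 2) * ((τ * c₃) ^ 2 * n * g ^ 2 * U) := by
        have : 0 ≤ (τ * c₃) ^ 2 * n * g ^ 2 := by positivity
        have hUK := mul_nonneg hU this
        nlinarith [mul_le_mul_of_nonneg_right hR this, mul_nonneg hUK (sq_nonneg (1 + 2 * τ))]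
    _ ≤ (2 + (1 + 2 * τ) ^ 2) * ((1 + 2 * (1 + 2 * τ)) ^ 2 * c₁ ^ 2 * s) := by gcongr
    _ ≤ 9 * (1 + 2 * τ) ^ 2 * (2 + (1 + 2 * τ) ^ 2) * c₁ ^ 2 * s := by
        have : (1 + 2 * (1 + 2 * τ)) ^ 2 ≤ 9 * (1 + 2 * τ) ^ 2 := by nlinarith
        have : 0 ≤ (2 + (1 + 2 * τ) ^ 2) * c₁ ^ 2 * s := by positivity
        nlinarith

theorem sqrt_sum_sq_le_of_cone {κ ι : Type*} [Fintype κ] [Fintype ι] [DecidableEq ι]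
    (X : Matrix κ ι ℝ) (h : ι → ℝ) (S : Finset ι) {a B τ c₁ c₃ n : ℝ} (hn : 0 < n) (hB : 0 ≤ B)
    (hτ : 0 < τ) (hc₁ : 0 < c₁) (hc₃ : 0 < c₃) (hd : ∀ i, a * n ≤ ∑ k, X k i ^ 2)
    (hc : ∀ i j, i ≠ j → |∑ k, X k i * X k j| ≤ B * n)
    (hgap : 2 * B * #S * (3 + 4 * τ) < a + B)
    (hup : τ * c₃ * ∑ k, (∑ i, h i * X k i) ^ 2
      ≤ 2 * c₁ * √n * ((1 + 2 * τ) * ∑ i ∈ S, |h i| - ∑ i ∈ Sᶜ, |h i|)) :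
    √(∑ i, h i ^ 2)
      ≤ 3 * (2 + 1 / τ) * √(2 + (1 + 2 * τ) ^ 2) * c₁ / ((a + B) * c₃) * √(#S / n) := by
  have hg : 0 < a + B := lt_of_le_of_lt (by positivity) hgap
  have hcone : ∑ i ∈ Sᶜ, |h i| ≤ (1 + 2 * τ) * ∑ i ∈ S, |h i| := by
    have := (show 0 ≤ τ * c₃ * ∑ k, (∑ i, h i * X k i) ^ 2 by positivity).trans hup
    exact sub_nonneg.mp (nonneg_of_mul_nonneg_right this (by positivity))
  -- `T` consists of the `#S` largest entries of `|h|` off `S`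
  obtain ⟨T, -, hT, hshell⟩ := exists_subset_card_le_four_mul_sum_sq_le h Sᶜ #S
  set P := S ∪ T
  have hSP : S ⊆ P := subset_union_left
  have hPS : Pᶜ ⊆ Sᶜ := compl_subset_compl.mpr hSP
  rw [show Sᶜ \ T = Pᶜ by ext; simp [P]] at hshell
  have hL2 : (∑ i ∈ P, |h i|) ^ 2 ≤ 2 * #S * ∑ i ∈ P, h i ^ 2 := by
    refine (sq_sum_abs_le_card_mul_sum_sq_of_subset subset_rfl h).trans ?_
    gcongr
    exact_mod_cast (card_union_le S T).trans (by omega)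
  have hU := sq_mul_le_of_quadratic_le (B := B) (W := τ * c₃) (x := 1 + 2 * τ) hg hB
    (by positivity) hc₁.le (by positivity) hn (Nat.cast_nonneg _)
    (sum_nonneg fun _ _ => sq_nonneg _) (sum_nonneg fun _ _ => abs_nonneg _)
    (sum_nonneg fun _ _ => abs_nonneg _) (by linarith)
    (by linarith [le_sum_sq_sum_mul_col X h hd hc P]) hup hcone
    (sq_sum_abs_le_card_mul_sum_sq_of_subset hSP h) hL2
    (sum_le_sum_of_subset_of_nonneg hPS fun _ _ _ => abs_nonneg _)
  have hR := four_mul_le_sq_mul_of_shell (Nat.cast_nonneg _) (sum_nonneg fun _ _ => sq_nonneg _)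
    (sum_nonneg fun _ _ => abs_nonneg _) hcone (sq_sum_abs_le_card_mul_sum_sq_of_subset hSP h)
    (sum_sq_le_sq_sum_abs_of_subset hPS h) hshell
  rw [← sum_add_sum_compl P]
  exact sqrt_add_le_of_sq_mul_le hτ hc₁.le hc₃ hg hn (Nat.cast_nonneg _)
    (sum_nonneg fun _ _ => sq_nonneg _) hR hU

theorem stmt10_general {n p : ℕ} (X : Matrix (Fin n) (Fin p) ℝ)
    (hV : ∀ j, (fun k => X k j) ≠ 0)
    (a b μ : ℝ) (hb : 0 < b) (hμ0 : 0 ≤ μ)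
    (haX : ∀ j, a * n ≤ ∑ k, X k j ^ 2)
    (hbX : ∀ j, (∑ k, X k j ^ 2) ≤ b * n)
    (hμ : ∀ i j : Fin p, i ≠ j →
      |∑ k, X k i * X k j| ≤
        μ * (Real.sqrt (∑ k, X k i ^ 2) * Real.sqrt (∑ k, X k j ^ 2)))
    (β v : Fin p → ℝ) (τ c₁ c₃ : ℝ) (hτ : 0 < τ) (hc₁ : 0 < c₁) (hc₃ : 0 < c₃)
    (s : ℕ) (hs : s = ({i | β i ≠ 0} : Set (Fin p)).ncard)
    (hgap : 2 * b * (3 + 4 * τ) * s * μ < a + b * μ)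
    (hineq : c₃ * (∑ k, (∑ i, (v i - β i) * X k i) ^ 2) ≤
        2 * c₁ * Real.sqrt n * (∑ i, |v i - β i|)
          - 2 * c₁ * (1 + 1 / τ) * Real.sqrt n * ((∑ i, |v i|) - ∑ i, |β i|)) :
    Real.sqrt (∑ i, (v i - β i) ^ 2) ≤
      (3 * (2 + 1 / τ) * Real.sqrt (2 + (1 + 2 * τ) ^ 2) * c₁
        / ((a + b * μ) * c₃)) * Real.sqrt (s / n) := by
  classical
  rcases Nat.eq_zero_or_pos n with rfl | hn
  · have : IsEmpty (Fin p) := ⟨fun j => hV j (funext fun k => k.elim0)⟩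
    simp
  set S : Finset (Fin p) := {i | β i ≠ 0}
  have hSs : #S = s := by rw [hs, ← Set.ncard_coe_finset]; simp [S]
  have hcol : ∀ i j, i ≠ j → |∑ k, X k i * X k j| ≤ b * μ * n := fun i j hij => calc
    _ ≤ μ * (√(b * n) * √(b * n)) := (hμ i j hij).trans (by gcongr <;> exact hbX _)
    _ = b * μ * n := by rw [Real.mul_self_sqrt (by positivity)]; ring
  have hup := mul_le_of_basic_inequality (S := S) (fun i hi => by simpa [S] using hi) hτ hc₁.le
    (Real.sqrt_nonneg _) hineq
  subst hSs
  exact sqrt_sum_sq_le_of_cone X (fun i => v i - β i) S (by exact_mod_cast hn) (by positivity)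
    hτ hc₁ hc₃ haX hcol (by linarith) hup

/-- Proposition 2.2, deterministic part: any `v` satisfying the basic inequality
obeys `‖v − β‖₂ ≤ κ_r √(s/n)`. -/
theorem stmt10 {n p : ℕ} (X : Matrix (Fin n) (Fin p) ℝ)
    (hV : ∀ j, (fun k => X k j) ≠ 0)
    (a b μ : ℝ) (ha : 0 < a) (hb : 0 < b) (hμ0 : 0 ≤ μ)
    (haX : ∀ j, a * n ≤ ∑ k, X k j ^ 2)
    (hbX : ∀ j, (∑ k, X k j ^ 2) ≤ b * n)
    (hμ : ∀ i j : Fin p, i ≠ j →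
      |∑ k, X k i * X k j| ≤
        μ * (Real.sqrt (∑ k, X k i ^ 2) * Real.sqrt (∑ k, X k j ^ 2)))
    (β v : Fin p → ℝ) (τ c₁ c₃ : ℝ) (hτ : 0 < τ) (hc₁ : 0 < c₁) (hc₃ : 0 < c₃)
    (s : ℕ) (hs : s = ({i | β i ≠ 0} : Set (Fin p)).ncard)
    (hgap : 2 * b * (3 + 4 * τ) * s * μ < a + b * μ)
    (hineq : c₃ * (∑ k, (∑ i, (v i - β i) * X k i) ^ 2) ≤
        2 * c₁ * Real.sqrt n * (∑ i, |v i - β i|)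
          - 2 * c₁ * (1 + 1 / τ) * Real.sqrt n * ((∑ i, |v i|) - ∑ i, |β i|)) :
    Real.sqrt (∑ i, (v i - β i) ^ 2) ≤
      (3 * (2 + 1 / τ) * Real.sqrt (2 + (1 + 2 * τ) ^ 2) * c₁
        / ((a + b * μ) * c₃)) * Real.sqrt (s / n) :=
  stmt10_general X hV a b μ hb hμ0 haX hbX hμ β v τ c₁ c₃ hτ hc₁ hc₃ s hs hgap hineq
end

section
/- Let f be continuous on the closed disc Δ₀ = {z ∈ ℂ : |z| ≤ R₀} and analytic on its interior, let 0 < r < R₀, and let ξ be a real random variable with |ξ| ≤ r almost surely. Then g(z) := E[f(z + ξ)] is well-defined and analytic on Δ = {z ∈ ℂ : |z| < R₀ − r}, with power series g(z) = Σ_{k≥0} E[f^{(k)}(ξ)] z^k / k! convergent on Δ. -/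
/-!
Fix `‖z‖ < ρ < R₀ - r` and let `M` bound `|f|` on the disc of radius `r + ρ`. Cauchy's estimate
on the discs of radius `ρ` centred at the points of `[-r, r]` gives
`|f⁽ᵏ⁾(ξ)| / k! ≤ M ρ⁻ᵏ`, so the Taylor series of `f` at `ξ`, evaluated at `z`, is dominated
by a convergent geometric series independent of `ω`. Dominated convergence integrates it term by
term, and a power series that converges on the disc `|z| < R₀ - r` is analytic there.
-/

open MeasureTheory Metric
open scoped Nat

theorem hasSum_iteratedDeriv_mul_pow_div_factorial {f : ℂ → ℂ} {c z : ℂ} {s : ℝ}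
    (hf : DifferentiableOn ℂ f (ball c s)) (hz : ‖z‖ < s) :
    HasSum (fun k => iteratedDeriv k f c * z ^ k / k !) (f (z + c)) := by
  have hzc : z + c ∈ ball c s := by simpa [mem_ball, dist_eq_norm] using hz
  refine (Complex.hasSum_taylorSeries_on_ball hf hzc).congr_fun fun k => ?_
  simp only [add_sub_cancel_right, smul_eq_mul]
  ring

theorem analyticOnNhd_of_forall_hasSum_mul_pow {𝕜 : Type*} [RCLike 𝕜] {a : ℕ → 𝕜} {g : 𝕜 → 𝕜}
    {R : ℝ} (h : ∀ z ∈ ball (0 : 𝕜) R, HasSum (fun k => a k * z ^ k) (g z)) :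
    AnalyticOnNhd 𝕜 g (ball 0 R) := by
  intro z hz
  have hR : 0 < R := pos_of_mem_ball hz
  set p := FormalMultilinearSeries.ofScalars 𝕜 a
  have hradius : ENNReal.ofReal R ≤ p.radius := by
    refine ENNReal.le_of_forall_nnreal_lt fun q hq => p.le_radius_of_tendsto (l := 0) ?_
    have hq_mem : ((q : ℝ) : 𝕜) ∈ ball (0 : 𝕜) R := by simpa using ENNReal.coe_lt_ofReal.mp hq
    simpa [p, FormalMultilinearSeries.ofScalars_norm] using
      (h _ hq_mem).summable.tendsto_atTop_zero.norm
  have hp : HasFPowerSeriesOnBall g p 0 (ENNReal.ofReal R) := by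
    refine ⟨hradius, by simpa using hR, fun {y} hy => ?_⟩
    have hy' : y ∈ ball (0 : 𝕜) R := by simpa [edist_lt_ofReal] using hy
    simpa [p, FormalMultilinearSeries.ofScalars_apply_eq, mul_comm] using h y hy'
  exact hp.analyticAt_of_mem (by simpa [edist_lt_ofReal] using hz)

section RandomArgument

variable {Ω : Type*} [MeasurableSpace Ω] {μ : Measure Ω} [IsFiniteMeasure μ]

theorem ContinuousOn.integrable_comp_of_ae_mem {α E : Type*} [TopologicalSpace α] [T2Space α]
    [MeasurableSpace α] [OpensMeasurableSpace α] [NormedAddCommGroup E] {g : α → E} {K : Set α}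
    (hg : ContinuousOn g K) (hK : IsCompact K) {X : Ω → α} (hX : AEMeasurable X μ)
    (hXK : ∀ᵐ ω ∂μ, X ω ∈ K) : Integrable (fun ω => g (X ω)) μ := by
  have hmap : (μ.map X).restrict K = μ.map X :=
    Measure.restrict_eq_self_of_ae_mem ((ae_map_iff hX hK.measurableSet).mpr hXK)
  have hmeas : AEStronglyMeasurable g (μ.map X) := by
    rw [← hmap]
    exact hg.aestronglyMeasurable_of_isCompact hK hK.measurableSet
  obtain ⟨C, hC⟩ := hK.exists_bound_of_continuousOn hg
  exact .of_bound (hmeas.comp_aemeasurable hX) C (hXK.mono fun ω hω => hC _ hω)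

theorem ContinuousOn.integrable_comp_of_ae_norm_le {E : Type*} [NormedAddCommGroup E]
    {g : ℂ → E} {R r : ℝ} (hg : ContinuousOn g (ball 0 R)) (hrR : r < R) {X : Ω → ℂ}
    (hX : AEMeasurable X μ) (hXr : ∀ᵐ ω ∂μ, ‖X ω‖ ≤ r) : Integrable (fun ω => g (X ω)) μ :=
  (hg.mono (closedBall_subset_ball hrR)).integrable_comp_of_ae_mem (isCompact_closedBall 0 r) hX
    (hXr.mono fun _ hω => mem_closedBall_zero_iff.mpr hω)

theorem hasSum_integral_iteratedDeriv_mul_pow_div_factorial {f : ℂ → ℂ} {R r : ℝ}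
    (hf : DifferentiableOn ℂ f (ball 0 R)) {X : Ω → ℂ} (hX : AEMeasurable X μ)
    (hXr : ∀ᵐ ω ∂μ, ‖X ω‖ ≤ r) {z : ℂ} (hz : ‖z‖ < R - r) :
    HasSum (fun k => (∫ ω, iteratedDeriv k f (X ω) ∂μ) * z ^ k / k !)
      (∫ ω, f (z + X ω) ∂μ) := by
  obtain ⟨ρ, hzρ, hρR⟩ := exists_between hz
  have hρ : 0 < ρ := (norm_nonneg z).trans_lt hzρ
  have hK : closedBall (0 : ℂ) (r + ρ) ⊆ ball 0 R := closedBall_subset_ball (by linarith)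
  obtain ⟨M, hM⟩ := (isCompact_closedBall (0 : ℂ) (r + ρ)).exists_bound_of_continuousOn
    (hf.continuousOn.mono hK)
  have hcauchy : ∀ᵐ ω ∂μ, ∀ k, ‖iteratedDeriv k f (X ω)‖ ≤ k ! * M / ρ ^ k := by
    filter_upwards [hXr] with ω hω k
    have hball : closedBall (X ω) ρ ⊆ closedBall 0 (r + ρ) :=
      closedBall_subset_closedBall' (by rw [dist_zero_right]; linarith)
    exact Complex.norm_iteratedDeriv_le_of_forall_mem_sphere_norm_le k hρ
      (hf.diffContOnCl_ball (hball.trans hK)) fun w hw => hM w (hball (sphere_subset_closedBall hw))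
  have hterm_le : ∀ k, ∀ᵐ ω ∂μ,
      ‖iteratedDeriv k f (X ω) * z ^ k / (k ! : ℂ)‖ ≤ M * (‖z‖ / ρ) ^ k := by
    intro k
    filter_upwards [hcauchy] with ω hω
    calc ‖iteratedDeriv k f (X ω) * z ^ k / (k ! : ℂ)‖
        = ‖iteratedDeriv k f (X ω)‖ * ‖z‖ ^ k / k ! := by simp
      _ ≤ k ! * M / ρ ^ k * ‖z‖ ^ k / k ! := by gcongr; exact hω k
      _ = M * (‖z‖ / ρ) ^ k := by rw [div_pow]; field_simp
  have hintegrable : ∀ k, Integrable (fun ω => iteratedDeriv k f (X ω)) μ := by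
    intro k
    have hcont : ContinuousOn (iteratedDeriv k f) (ball 0 R) := by
      rw [iteratedDeriv_eq_iterate]
      exact ((hf.analyticOnNhd isOpen_ball).iterated_deriv k).continuousOn
    exact hcont.integrable_comp_of_ae_norm_le (by linarith) hX hXr
  have hsum := hasSum_integral_of_dominated_convergence (fun k _ => M * (‖z‖ / ρ) ^ k)
    (fun k => (((hintegrable k).mul_const _).div_const _).aestronglyMeasurable) hterm_le
    (ae_of_all _ fun _ => (summable_geometric_of_lt_one (by positivity)
      ((div_lt_one hρ).mpr hzρ)).mul_left M) (integrable_const _)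
    (hXr.mono fun ω hω => hasSum_iteratedDeriv_mul_pow_div_factorial
      (hf.mono (ball_subset_ball' (by rw [dist_zero_right]; linarith))) hz)
  simpa only [integral_div, integral_mul_const] using hsum

end RandomArgument

theorem stmt13_general {Ω : Type*} [MeasurableSpace Ω] (ℙ : Measure Ω) [IsProbabilityMeasure ℙ]
    (f : ℂ → ℂ) (R₀ r : ℝ)
    (hfa : DifferentiableOn ℂ f (Metric.ball 0 R₀))
    (ξ : Ω → ℝ) (hξm : Measurable ξ) (hξ : ∀ᵐ ω ∂ℙ, |ξ ω| ≤ r) :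
    (∀ z ∈ Metric.ball (0 : ℂ) (R₀ - r), Integrable (fun ω => f (z + ξ ω)) ℙ) ∧
    AnalyticOnNhd ℂ (fun z => ∫ ω, f (z + ξ ω) ∂ℙ) (Metric.ball 0 (R₀ - r)) ∧
    (∀ z ∈ Metric.ball (0 : ℂ) (R₀ - r),
      HasSum (fun k : ℕ => (∫ ω, iteratedDeriv k f (ξ ω) ∂ℙ) * z ^ k / (k.factorial : ℂ))
        (∫ ω, f (z + ξ ω) ∂ℙ)) := by
  have hX : AEMeasurable (fun ω => (ξ ω : ℂ)) ℙ :=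
    (Complex.measurable_ofReal.comp hξm).aemeasurable
  have hXr : ∀ᵐ ω ∂ℙ, ‖(ξ ω : ℂ)‖ ≤ r := by
    simpa only [Complex.norm_real, Real.norm_eq_abs] using hξ
  have hsum := fun z (hz : z ∈ ball (0 : ℂ) (R₀ - r)) =>
    hasSum_integral_iteratedDeriv_mul_pow_div_factorial hfa hX hXr (mem_ball_zero_iff.mp hz)
  refine ⟨fun z hz => ?_, analyticOnNhd_of_forall_hasSum_mul_pow
    (a := fun k => (∫ ω, iteratedDeriv k f (ξ ω) ∂ℙ) / k !) fun z hz => ?_, hsum⟩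
  · rw [mem_ball_zero_iff] at hz
    have hzX : ∀ᵐ ω ∂ℙ, ‖z + ξ ω‖ ≤ ‖z‖ + r :=
      hXr.mono fun ω hω => (norm_add_le _ _).trans (by gcongr)
    exact hfa.continuousOn.integrable_comp_of_ae_norm_le (by linarith)
      (aemeasurable_const.add hX) hzX
  · simpa only [mul_div_right_comm] using hsum z hz

/-- Proposition 3.1 (1): `g(z) = E[f(z+ξ)]` is well-defined and analytic on
`{|z| < R₀ − r}`, with power series `g(z) = Σ E[f⁽ᵏ⁾(ξ)] zᵏ/k!`. -/
theorem stmt13 {Ω : Type*} [MeasurableSpace Ω] (ℙ : Measure Ω) [IsProbabilityMeasure ℙ]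
    (f : ℂ → ℂ) (R₀ r : ℝ) (hr : 0 < r) (hrR : r < R₀)
    (hfc : ContinuousOn f (Metric.closedBall 0 R₀))
    (hfa : DifferentiableOn ℂ f (Metric.ball 0 R₀))
    (ξ : Ω → ℝ) (hξm : Measurable ξ) (hξ : ∀ᵐ ω ∂ℙ, |ξ ω| ≤ r) :
    (∀ z ∈ Metric.ball (0 : ℂ) (R₀ - r), Integrable (fun ω => f (z + ξ ω)) ℙ) ∧
    AnalyticOnNhd ℂ (fun z => ∫ ω, f (z + ξ ω) ∂ℙ) (Metric.ball 0 (R₀ - r)) ∧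
    (∀ z ∈ Metric.ball (0 : ℂ) (R₀ - r),
      HasSum (fun k : ℕ => (∫ ω, iteratedDeriv k f (ξ ω) ∂ℙ) * z ^ k / (k.factorial : ℂ))
        (∫ ω, f (z + ξ ω) ∂ℙ)) :=
  stmt13_general ℙ f R₀ r hfa ξ hξm hξ
end
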